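/- There exist real constants c and c' with c > c' such that for all odd n ≥ 1, hom(P_{n+4}, T(7,1,9)) = c λ^n + d μ^n and hom(E_{n+4}, T(7,1,9)) = c' λ^n + d' μ^n for some reals d, d', where λ > μ > 0 are the positive roots of t^4 − 17t^2 + 63 = 0. Consequently, for all sufficiently large odd n, hom(E_n, T(7,1,9)) < hom(P_n, T(7,1,9)). -/

import Mathlib

/-- A graph, possibly with loops but without multiple edges: a symmetric
adjacency relation on the vertex type. -/
structure LGraph (V : Type*) where
  Adj : V → V → Prop
  symm : ∀ {u v}, Adj u v → Adj v u

/-- `f` is a homomorphism (H-coloring) from `G` to `H`. -/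
def LGraph.IsHom {A B : Type*} (G : LGraph A) (H : LGraph B) (f : A → B) : Prop :=
  ∀ ⦃x y⦄, G.Adj x y → H.Adj (f x) (f y)

/-- The number of homomorphisms from `G` to `H`. -/
noncomputable def homCount {A B : Type*} (G : LGraph A) (H : LGraph B) : ℕ :=
  Nat.card {f : A → B // G.IsHom H f}

/-- `e` is an automorphism of `H`. -/
def IsAut {V : Type*} (H : LGraph V) (e : V ≃ V) : Prop :=
  ∀ a b, H.Adj (e a) (e b) ↔ H.Adj a b

/-- `u` and `v` are automorphically similar in `H`. -/
def AutSim {V : Type*} (H : LGraph V) (u v : V) : Prop :=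
  ∃ e : V ≃ V, IsAut H e ∧ e u = v

/-- The path on `n` vertices. -/
def pathGraph (n : ℕ) : LGraph (Fin n) where
  Adj i j := j.val = i.val + 1 ∨ i.val = j.val + 1
  symm h := h.symm

/-- Upward adjacency for `eGraph`. -/
def eUp (n : ℕ) (i j : Fin n) : Prop :=
  (j.val = i.val + 1 ∧ j.val ≤ n - 2) ∨ (i.val = n - 4 ∧ j.val = n - 1)

/-- The tree `E_n`: the path on `n-1` vertices `0,…,n-2` with a pendant
vertex `n-1` attached to vertex `n-4` (distance 2 from the end `n-2`). -/
def eGraph (n : ℕ) : LGraph (Fin n) where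
  Adj i j := eUp n i j ∨ eUp n j i
  symm h := h.symm

/-- Vertices of the spherically symmetric rooted tree `T(x,y,z)`. -/
abbrev TVert (x y z : ℕ) : Type :=
  Unit ⊕ Fin x ⊕ (Fin x × Fin y) ⊕ (Fin x × Fin y × Fin z)

/-- Parent-to-child adjacency in `T(x,y,z)`. -/
def tUp (x y z : ℕ) : TVert x y z → TVert x y z → Prop
  | Sum.inl _, Sum.inr (Sum.inl _) => True
  | Sum.inr (Sum.inl i), Sum.inr (Sum.inr (Sum.inl p)) => p.1 = i
  | Sum.inr (Sum.inr (Sum.inl p)), Sum.inr (Sum.inr (Sum.inr q)) =>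
      q.1 = p.1 ∧ q.2.1 = p.2
  | _, _ => False

/-- The tree `T(x,y,z)`: the root has `x` children, each child has `y`
children, each grandchild has `z` children. -/
def tGraph (x y z : ℕ) : LGraph (TVert x y z) where
  Adj a b := tUp x y z a b ∨ tUp x y z b a
  symm h := h.symm

/-- `T̂(x,y,z)`: `T(x,y,z)` with a loop added at the root. -/
def tHatGraph (x y z : ℕ) : LGraph (TVert x y z) where
  Adj a b := tUp x y z a b ∨ tUp x y z b a ∨ (a = Sum.inl () ∧ b = Sum.inl ())
  symm := by
    rintro a b (h | h | ⟨h1, h2⟩)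
    · exact Or.inr (Or.inl h)
    · exact Or.inl h
    · exact Or.inr (Or.inr ⟨h2, h1⟩)

/-- The distance level of a vertex of `T(x,y,z)` from the root. -/
def tLevel {x y z : ℕ} : TVert x y z → Fin 4
  | Sum.inl _ => 0
  | Sum.inr (Sum.inl _) => 1
  | Sum.inr (Sum.inr (Sum.inl _)) => 2
  | Sum.inr (Sum.inr (Sum.inr _)) => 3

/-- Upward adjacency for the path-like extension of `G` at `v0`. -/
def extUp {A : Type*} (G : LGraph A) (v0 : A) (n : ℕ) :
    (A ⊕ Fin n) → (A ⊕ Fin n) → Prop := fun a b =>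
  (∃ u w, G.Adj u w ∧ a = Sum.inl u ∧ b = Sum.inl w) ∨
  (∃ i : Fin n, i.val = 0 ∧ a = Sum.inl v0 ∧ b = Sum.inr i) ∨
  (∃ i j : Fin n, j.val = i.val + 1 ∧ a = Sum.inr i ∧ b = Sum.inr j)

/-- `G_n`: the graph obtained from `G_0 = G` by appending a path of `n` new
vertices at `v0`. -/
def pathAppend {A : Type*} (G : LGraph A) (v0 : A) (n : ℕ) : LGraph (A ⊕ Fin n) where
  Adj a b := extUp G v0 n a b ∨ extUp G v0 n b a
  symm h := h.symm

/-!
Homomorphisms from a path into a graph `H` are walks, so they are counted by powers of the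
adjacency matrix `A`: `hom(P_{m+1}, H) = ∑ᵥ (Aᵐ 1)ᵥ`, and cutting `E_{n+4}` at its branch vertex
gives `hom(E_{n+4}, H) = ∑ᵥ (Aⁿ 1)ᵥ (A² 1)ᵥ (A 1)ᵥ`. In `T(x,y,z)` the partition into levels is
equitable, so `Aᵐ 1` is constant on levels and computed by the `4 × 4` quotient matrix `Q`, whose
characteristic polynomial is `t⁴ - (x+y+z) t² + x z`. Hence both counts satisfy
`F (m+4) = (x+y+z) F (m+2) - x z F m`, and their odd-indexed terms are `c λⁿ + d μⁿ`. For
`T(7,1,9)` the first values `9366, 106302` (paths) and `9492, 106932` (`E`) make the two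
coefficients of `λⁿ` differ by `(126 μ² - 630) / (λ (λ² - μ²)) > 0`, as `μ² > 5`; since `λ > μ`,
the `λⁿ` terms dominate.
-/

open Matrix Filter

theorem Nat.card_subtype_eq_sum_fiber {α γ : Type*} [Finite α] [Fintype γ] (P : α → Prop)
    (φ : α → γ) : Nat.card {a // P a} = ∑ c, Nat.card {a // P a ∧ φ a = c} := by
  rw [← Nat.card_congr (Equiv.sigmaFiberEquiv fun a : {a // P a} => φ a), Nat.card_sigma]
  exact Finset.sum_congr rfl fun c _ =>
    Nat.card_congr (Equiv.subtypeSubtypeEquivSubtypeInter P (φ · = c))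

theorem Nat.card_subtype_prod_eq_sum {α β γ : Type*} [Finite α] [Finite β] [Fintype γ]
    (P : α → Prop) (φ : α → γ) (Q : γ → β → Prop) :
    Nat.card {x : α × β // P x.1 ∧ Q (φ x.1) x.2} =
      ∑ c, Nat.card {a // P a ∧ φ a = c} * Nat.card {b // Q c b} := by
  let e : {x : α × β // P x.1 ∧ Q (φ x.1) x.2} ≃ Σ c, {a // P a ∧ φ a = c} × {b // Q c b} :=
    { toFun x := ⟨φ x.1.1, ⟨x.1.1, x.2.1, rfl⟩, ⟨x.1.2, x.2.2⟩⟩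
      invFun s := ⟨(s.2.1.1, s.2.2.1), s.2.1.2.1, by simpa only [s.2.1.2.2] using s.2.2.2⟩
      left_inv _ := rfl
      right_inv := by rintro ⟨c, ⟨a, ha, rfl⟩, b, hb⟩; rfl }
  simp only [Nat.card_congr e, Nat.card_sigma, Nat.card_prod]

def Fin.snocThreeEquiv (B : Type*) (n : ℕ) : (Fin (n + 1) → B) × B × B × B ≃ (Fin (n + 4) → B) where
  toFun x := Fin.snoc (Fin.snoc (Fin.snoc x.1 x.2.1) x.2.2.1) x.2.2.2
  invFun f := (Fin.init (Fin.init (Fin.init f)), Fin.init (Fin.init f) (Fin.last _),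
    Fin.init f (Fin.last _), f (Fin.last _))
  left_inv x := by simp
  right_inv f := by simp [Fin.snoc_init_self]

namespace LGraph

variable {B : Type*} (H : LGraph B)

open Classical in
noncomputable def adjMatrix : Matrix B B ℕ := Matrix.of fun u v => if H.Adj u v then 1 else 0

theorem adjMatrix_comm (u v : B) : H.adjMatrix u v = H.adjMatrix v u := by
  simp only [adjMatrix, of_apply]
  congr 1
  exact propext ⟨H.symm, H.symm⟩

theorem card_adj_and_eq (u v : B) : Nat.card {b // H.Adj u b ∧ b = v} = H.adjMatrix u v := by
  simp only [adjMatrix, of_apply]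
  split_ifs with h
  · exact Nat.card_eq_one_iff_exists.2 ⟨⟨v, h, rfl⟩, fun ⟨_, _, hb⟩ => Subtype.ext hb⟩
  · have : IsEmpty {b // H.Adj u b ∧ b = v} := ⟨fun ⟨_, hb, hbv⟩ => h (hbv ▸ hb)⟩
    exact Nat.card_of_isEmpty

theorem card_adj [Fintype B] (u : B) : Nat.card {b // H.Adj u b} = (H.adjMatrix *ᵥ 1) u := by
  classical
  simp [Nat.card_eq_fintype_card, Fintype.card_subtype, mulVec, dotProduct, adjMatrix]

theorem card_adj_adj [Fintype B] (v : B) :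
    Nat.card {pq : B × B // H.Adj v pq.1 ∧ H.Adj pq.1 pq.2} =
      (H.adjMatrix *ᵥ (H.adjMatrix *ᵥ 1)) v := by
  refine (Nat.card_subtype_prod_eq_sum (H.Adj v) id H.Adj).trans ?_
  simp only [id, card_adj_and_eq, card_adj, mulVec, dotProduct]

theorem card_adj_adj_and_adj [Fintype B] [DecidableEq B] (v : B) :
    Nat.card {t : B × B × B // H.Adj v t.1 ∧ H.Adj t.1 t.2.1 ∧ H.Adj v t.2.2} =
      (H.adjMatrix ^ 2 *ᵥ 1) v * (H.adjMatrix *ᵥ 1) v := by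
  let e : {t : B × B × B // H.Adj v t.1 ∧ H.Adj t.1 t.2.1 ∧ H.Adj v t.2.2} ≃
      {pq : B × B // H.Adj v pq.1 ∧ H.Adj pq.1 pq.2} × {r // H.Adj v r} :=
    { toFun t := (⟨(t.1.1, t.1.2.1), t.2.1, t.2.2.1⟩, ⟨t.1.2.2, t.2.2.2⟩)
      invFun s := ⟨(s.1.1.1, s.1.1.2, s.2.1), s.1.2.1, s.1.2.2, s.2.2⟩
      left_inv _ := rfl
      right_inv _ := rfl }
  rw [Nat.card_congr e, Nat.card_prod, card_adj_adj, card_adj, sq, ← mulVec_mulVec]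

theorem isHom_pathGraph_iff {m : ℕ} (f : Fin (m + 1) → B) :
    (pathGraph (m + 1)).IsHom H f ↔ ∀ k : Fin m, H.Adj (f k.castSucc) (f k.succ) := by
  refine ⟨fun h k => h (Or.inl rfl), fun h i j hij => ?_⟩
  rcases hij with hij | hij
  · obtain ⟨k, rfl, rfl⟩ : ∃ k : Fin m, k.castSucc = i ∧ k.succ = j :=
      ⟨⟨i, by omega⟩, rfl, Fin.ext hij.symm⟩
    exact h k
  · obtain ⟨k, rfl, rfl⟩ : ∃ k : Fin m, k.castSucc = j ∧ k.succ = i :=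
      ⟨⟨j, by omega⟩, rfl, Fin.ext hij.symm⟩
    exact H.symm (h k)

theorem isHom_pathGraph_snoc {m : ℕ} (g : Fin (m + 1) → B) (b : B) :
    (pathGraph (m + 2)).IsHom H (Fin.snoc g b) ↔
      (pathGraph (m + 1)).IsHom H g ∧ H.Adj (g (Fin.last m)) b := by
  refine (isHom_pathGraph_iff H _).trans ?_
  rw [Fin.forall_fin_succ', isHom_pathGraph_iff]
  simp only [Fin.succ_castSucc, Fin.snoc_castSucc, Fin.succ_last, Fin.snoc_last]

theorem isHom_eGraph_iff {n : ℕ} (f : Fin (n + 4) → B) :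
    (eGraph (n + 4)).IsHom H f ↔
      (pathGraph (n + 3)).IsHom H (Fin.init f) ∧
        H.Adj (f ⟨n, by omega⟩) (f (Fin.last (n + 3))) := by
  refine ⟨fun h => ⟨(isHom_pathGraph_iff H _).2 fun k => h (Or.inl (Or.inl ⟨rfl, ?_⟩)),
    h (Or.inl (Or.inr ⟨?_, ?_⟩))⟩, fun ⟨hp, hn⟩ => ?_⟩
  · simp only [Fin.val_succ, Fin.val_castSucc]; omega
  · simp
  · simp
  suffices hup : ∀ i j, eUp (n + 4) i j → H.Adj (f i) (f j) from
    fun i j hij => hij.elim (hup i j) fun h => H.symm (hup j i h)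
  rintro i j (⟨hij, hj⟩ | ⟨hi, hj⟩)
  · obtain ⟨k, rfl, rfl⟩ : ∃ k : Fin (n + 2), k.castSucc.castSucc = i ∧ k.succ.castSucc = j :=
      ⟨⟨i, by omega⟩, rfl, Fin.ext (by simp [hij])⟩
    exact (isHom_pathGraph_iff H _).1 hp k
  · rwa [show i = ⟨n, by omega⟩ from Fin.ext (by simp at hi; omega),
      show j = Fin.last (n + 3) from Fin.ext (by simp at hj ⊢; omega)]

theorem isHom_eGraph_snoc {n : ℕ} (g : Fin (n + 1) → B) (p q r : B) :
    (eGraph (n + 4)).IsHom H (Fin.snoc (Fin.snoc (Fin.snoc g p) q) r) ↔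
      (pathGraph (n + 1)).IsHom H g ∧ H.Adj (g (Fin.last n)) p ∧ H.Adj p q ∧
        H.Adj (g (Fin.last n)) r := by
  have hn : (⟨n, by omega⟩ : Fin (n + 4)) = (Fin.last n).castSucc.castSucc.castSucc := rfl
  rw [isHom_eGraph_iff, Fin.init_snoc, isHom_pathGraph_snoc, isHom_pathGraph_snoc, hn]
  simp only [Fin.snoc_castSucc, Fin.snoc_last, and_assoc]

variable [Fintype B] [DecidableEq B]

theorem card_isHom_pathGraph_last (m : ℕ) (v : B) :
    Nat.card {f : Fin (m + 1) → B // (pathGraph (m + 1)).IsHom H f ∧ f (Fin.last m) = v} =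
      (H.adjMatrix ^ m *ᵥ 1) v := by
  induction m generalizing v with
  | zero =>
    rw [pow_zero, one_mulVec, Pi.one_apply]
    refine Nat.card_eq_one_iff_exists.2 ⟨⟨fun _ => v, ?_, rfl⟩, ?_⟩
    · rintro i j (h | h) <;> omega
    · rintro ⟨f, -, hf⟩
      exact Subtype.ext (funext fun i => by rwa [Subsingleton.elim (α := Fin 1) i (Fin.last 0)])
  | succ m ih =>
    let e := (Equiv.prodComm _ _).trans (Fin.snocEquiv fun _ : Fin (m + 2) => B)
    have he : ∀ x : (Fin (m + 1) → B) × B,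
        (pathGraph (m + 1)).IsHom H x.1 ∧ (H.Adj (x.1 (Fin.last m)) x.2 ∧ x.2 = v) ↔
          (pathGraph (m + 2)).IsHom H (Fin.snoc x.1 x.2) ∧
            (Fin.snoc x.1 x.2 : Fin (m + 2) → B) (Fin.last _) = v := by
      intro x
      rw [isHom_pathGraph_snoc, Fin.snoc_last, and_assoc]
    rw [← Nat.card_congr (e.subtypeEquiv he)]
    refine (Nat.card_subtype_prod_eq_sum ((pathGraph (m + 1)).IsHom H) (fun g => g (Fin.last m))
      fun u b => H.Adj u b ∧ b = v).trans ?_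
    simp only [ih, card_adj_and_eq, pow_succ', ← mulVec_mulVec]
    simp only [mulVec, dotProduct, adjMatrix_comm H v, mul_comm]

theorem homCount_pathGraph (m : ℕ) :
    homCount (pathGraph (m + 1)) H = ∑ v, (H.adjMatrix ^ m *ᵥ 1) v := by
  rw [homCount, Nat.card_subtype_eq_sum_fiber _ fun f : Fin (m + 1) → B => f (Fin.last m)]
  exact Finset.sum_congr rfl fun v _ => card_isHom_pathGraph_last H m v

theorem homCount_eGraph (n : ℕ) :
    homCount (eGraph (n + 4)) H =
      ∑ v, (H.adjMatrix ^ n *ᵥ 1) v * ((H.adjMatrix ^ 2 *ᵥ 1) v * (H.adjMatrix *ᵥ 1) v) := by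
  rw [homCount, ← Nat.card_congr ((Fin.snocThreeEquiv B n).subtypeEquiv fun x =>
    (isHom_eGraph_snoc H x.1 x.2.1 x.2.2.1 x.2.2.2).symm)]
  refine (Nat.card_subtype_prod_eq_sum ((pathGraph (n + 1)).IsHom H) (fun g => g (Fin.last n))
    fun v (t : B × B × B) => H.Adj v t.1 ∧ H.Adj t.1 t.2.1 ∧ H.Adj v t.2.2).trans ?_
  simp only [card_isHom_pathGraph_last, card_adj_adj_and_adj]

end LGraph

section SphericallySymmetricTree

variable (x y z : ℕ)

-- the default bound is too small to find the `Semiring` structure on matrices over `TVert x y z`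
set_option synthInstance.maxSize 256

/-- A vertex of `T(x,y,z)` at level `i` has exactly `levelMatrix x y z i j` neighbours at
level `j`. -/
def levelMatrix : Matrix (Fin 4) (Fin 4) ℕ :=
  !![0, x, 0, 0; 1, 0, y, 0; 0, 1, 0, z; 0, 0, 1, 0]

def levelSizes : Fin 4 → ℕ := ![1, x, x * y, x * y * z]

theorem adjMatrix_mulVec_comp_tLevel (g : Fin 4 → ℕ) :
    (tGraph x y z).adjMatrix *ᵥ (g ∘ tLevel) = (levelMatrix x y z *ᵥ g) ∘ tLevel := by
  funext v
  rcases v with _ | _ | _ | _ <;>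
    simp [mulVec, dotProduct, Fintype.sum_sum_type, Fintype.sum_prod_type_right, LGraph.adjMatrix,
      tGraph, tUp, tLevel, levelMatrix, Fin.sum_univ_four, ite_and, Finset.sum_ite_eq,
      Finset.sum_ite_eq']

theorem adjMatrix_pow_mulVec_comp_tLevel (m : ℕ) (g : Fin 4 → ℕ) :
    (tGraph x y z).adjMatrix ^ m *ᵥ (g ∘ tLevel) = (levelMatrix x y z ^ m *ᵥ g) ∘ tLevel := by
  induction m with
  | zero => simp
  | succ m ih =>
    rw [pow_succ', pow_succ', ← mulVec_mulVec, ← mulVec_mulVec, ih, adjMatrix_mulVec_comp_tLevel]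

theorem sum_comp_tLevel (g : Fin 4 → ℕ) :
    ∑ v, g (tLevel (x := x) (y := y) (z := z) v) = levelSizes x y z ⬝ᵥ g := by
  simp [dotProduct, levelSizes, Fintype.sum_sum_type, tLevel, Fin.sum_univ_four, mul_assoc,
    add_assoc]

theorem levelMatrix_pow_four :
    levelMatrix x y z ^ 4 + (x * z : ℕ) • (1 : Matrix (Fin 4) (Fin 4) ℕ) =
      (x + y + z : ℕ) • levelMatrix x y z ^ 2 := by
  ext i j
  fin_cases i <;> fin_cases j <;>
    simp [pow_succ, Matrix.mul_apply, Matrix.natCast_apply, levelMatrix] <;> ring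

theorem dotProduct_levelMatrix_pow_add_four (w u : Fin 4 → ℕ) (m : ℕ) :
    w ⬝ᵥ (levelMatrix x y z ^ (m + 4) *ᵥ u) + x * z * (w ⬝ᵥ (levelMatrix x y z ^ m *ᵥ u)) =
      (x + y + z) * (w ⬝ᵥ (levelMatrix x y z ^ (m + 2) *ᵥ u)) := by
  have h := congrArg (fun M : Matrix (Fin 4) (Fin 4) ℕ => w ⬝ᵥ ((M * levelMatrix x y z ^ m) *ᵥ u))
    (levelMatrix_pow_four x y z)
  simp only [add_mul, smul_mul, one_mul, ← pow_add, add_mulVec, smul_mulVec, dotProduct_add,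
    dotProduct_smul, smul_eq_mul] at h
  rw [add_comm 4, add_comm 2] at h
  linarith

theorem homCount_pathGraph_tGraph (m : ℕ) :
    homCount (pathGraph (m + 1)) (tGraph x y z) =
      levelSizes x y z ⬝ᵥ (levelMatrix x y z ^ m *ᵥ 1) := by
  rw [LGraph.homCount_pathGraph, ← sum_comp_tLevel]
  exact Finset.sum_congr rfl fun v _ => congrFun (adjMatrix_pow_mulVec_comp_tLevel x y z m 1) v

theorem homCount_eGraph_tGraph (n : ℕ) :
    homCount (eGraph (n + 4)) (tGraph x y z) =
      (levelSizes x y z * (levelMatrix x y z ^ 2 *ᵥ 1) * (levelMatrix x y z *ᵥ 1)) ⬝ᵥ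
        (levelMatrix x y z ^ n *ᵥ 1) := by
  have h := adjMatrix_pow_mulVec_comp_tLevel x y z
  have h1 := adjMatrix_mulVec_comp_tLevel x y z 1
  rw [LGraph.homCount_eGraph]
  simp only [show (1 : TVert x y z → ℕ) = (1 : Fin 4 → ℕ) ∘ tLevel from rfl, h, h1,
    Function.comp_apply]
  rw [sum_comp_tLevel x y z fun l => (levelMatrix x y z ^ n *ᵥ 1) l *
    ((levelMatrix x y z ^ 2 *ᵥ 1) l * (levelMatrix x y z *ᵥ 1) l)]
  exact Finset.sum_congr rfl fun l _ => by simp only [Pi.mul_apply]; ring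

theorem homCount_pathGraph_tGraph_add_four (n : ℕ) :
    homCount (pathGraph (n + 4 + 4)) (tGraph x y z) +
        x * z * homCount (pathGraph (n + 4)) (tGraph x y z) =
      (x + y + z) * homCount (pathGraph (n + 2 + 4)) (tGraph x y z) := by
  simpa only [homCount_pathGraph_tGraph, add_assoc] using
    dotProduct_levelMatrix_pow_add_four x y z _ 1 (n + 3)

theorem homCount_eGraph_tGraph_add_four (n : ℕ) :
    homCount (eGraph (n + 4 + 4)) (tGraph x y z) +
        x * z * homCount (eGraph (n + 4)) (tGraph x y z) =
      (x + y + z) * homCount (eGraph (n + 2 + 4)) (tGraph x y z) := by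
  simp only [homCount_eGraph_tGraph]
  exact dotProduct_levelMatrix_pow_add_four x y z _ 1 n

end SphericallySymmetricTree

theorem homCount_tGraph_seven_one_nine :
    homCount (pathGraph 5) (tGraph 7 1 9) = 9366 ∧
      homCount (pathGraph 7) (tGraph 7 1 9) = 106302 ∧
      homCount (eGraph 5) (tGraph 7 1 9) = 9492 ∧ homCount (eGraph 7) (tGraph 7 1 9) = 106932 := by
  refine ⟨?_, ?_, ?_, ?_⟩
  · rw [homCount_pathGraph_tGraph 7 1 9 4]; decide
  · rw [homCount_pathGraph_tGraph 7 1 9 6]; decide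
  · rw [homCount_eGraph_tGraph 7 1 9 1]; decide
  · rw [homCount_eGraph_tGraph 7 1 9 3]; decide

noncomputable def closedFormCoeff (lam mu a b : ℝ) : ℝ :=
  (b - mu ^ 2 * a) / (lam * (lam ^ 2 - mu ^ 2))

theorem odd_eq_closedForm_of_recurrence {s p lam mu : ℝ} (hl : lam ^ 4 - s * lam ^ 2 + p = 0)
    (hmu : mu ^ 4 - s * mu ^ 2 + p = 0) (hlam : lam ≠ 0) (hmu0 : mu ≠ 0) (hne : lam ^ 2 ≠ mu ^ 2)
    {F : ℕ → ℝ} (hrec : ∀ m, F (m + 4) + p * F m = s * F (m + 2)) ⦃n : ℕ⦄ (hn : Odd n) :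
    F n = closedFormCoeff lam mu (F 1) (F 3) * lam ^ n +
      closedFormCoeff mu lam (F 1) (F 3) * mu ^ n := by
  have hsub : lam ^ 2 - mu ^ 2 ≠ 0 := sub_ne_zero.2 hne
  have hsub' : mu ^ 2 - lam ^ 2 ≠ 0 := sub_ne_zero.2 hne.symm
  induction n using Nat.strong_induction_on with
  | _ n ih =>
    obtain ⟨k, rfl⟩ := hn
    match k with
    | 0 => simp only [closedFormCoeff, mul_zero, zero_add, pow_one]; field_simp; ring
    | 1 => simp only [closedFormCoeff, mul_one, Nat.reduceAdd]; field_simp; ring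
    | k + 2 =>
      have h1 := ih (2 * k + 1) (by omega) ⟨k, rfl⟩
      have h3 := ih (2 * k + 3) (by omega) ⟨k + 1, by ring⟩
      have hr := hrec (2 * k + 1)
      rw [show 2 * k + 1 + 4 = 2 * (k + 2) + 1 by ring, show 2 * k + 1 + 2 = 2 * k + 3 by ring,
        h1, h3] at hr
      linear_combination hr - closedFormCoeff lam mu (F 1) (F 3) * lam ^ (2 * k + 1) * hl -
        closedFormCoeff mu lam (F 1) (F 3) * mu ^ (2 * k + 1) * hmu

theorem exists_forall_mul_pow_add_mul_pow_lt {lam mu c c' d d' : ℝ} (hmu : 0 < mu)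
    (hlm : mu < lam) (hc : c' < c) :
    ∃ N, ∀ n ≥ N, c' * lam ^ n + d' * mu ^ n < c * lam ^ n + d * mu ^ n := by
  have hgrow : Tendsto (fun n : ℕ => (c - c') * (lam / mu) ^ n) atTop atTop :=
    (tendsto_pow_atTop_atTop_of_one_lt ((one_lt_div hmu).2 hlm)).const_mul_atTop (sub_pos.2 hc)
  obtain ⟨N, hN⟩ := eventually_atTop.1 (hgrow.eventually_gt_atTop (d' - d))
  refine ⟨N, fun n hn => ?_⟩
  have h := hN n hn
  rw [div_pow, ← mul_div_assoc, lt_div_iff₀ (pow_pos hmu n)] at h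
  linarith

theorem stmt11 (lam mu : ℝ) (hlm : lam > mu) (hm : mu > 0)
    (hl : lam ^ 4 - 17 * lam ^ 2 + 63 = 0) (hmu : mu ^ 4 - 17 * mu ^ 2 + 63 = 0) :
    (∃ c c' d d' : ℝ, c > c' ∧ ∀ n : ℕ, Odd n →
      (homCount (pathGraph (n + 4)) (tGraph 7 1 9) : ℝ) = c * lam ^ n + d * mu ^ n ∧
      (homCount (eGraph (n + 4)) (tGraph 7 1 9) : ℝ) = c' * lam ^ n + d' * mu ^ n) ∧
    (∃ N : ℕ, ∀ n ≥ N, Odd n →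
      homCount (eGraph n) (tGraph 7 1 9) < homCount (pathGraph n) (tGraph 7 1 9)) := by
  have hsq : mu ^ 2 < lam ^ 2 := by gcongr
  have hP := odd_eq_closedForm_of_recurrence hl hmu (hm.trans hlm).ne' hm.ne' hsq.ne'
    (F := fun n => (homCount (pathGraph (n + 4)) (tGraph 7 1 9) : ℝ)) fun m => by
      exact_mod_cast homCount_pathGraph_tGraph_add_four 7 1 9 m
  have hE := odd_eq_closedForm_of_recurrence hl hmu (hm.trans hlm).ne' hm.ne' hsq.ne'
    (F := fun n => (homCount (eGraph (n + 4)) (tGraph 7 1 9) : ℝ)) fun m => by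
      exact_mod_cast homCount_eGraph_tGraph_add_four 7 1 9 m
  obtain ⟨hP5, hP7, hE5, hE7⟩ := homCount_tGraph_seven_one_nine
  simp only [Nat.reduceAdd, hP5, hP7, hE5, hE7] at hP hE
  have hc : closedFormCoeff lam mu 9492 106932 < closedFormCoeff lam mu 9366 106302 := by
    have hmu2 : 5 < mu ^ 2 := by nlinarith
    exact div_lt_div_of_pos_right (by linarith) (mul_pos (hm.trans hlm) (sub_pos.2 hsq))
  refine ⟨⟨_, _, _, _, hc, fun n hn => ⟨hP hn, hE hn⟩⟩, ?_⟩
  obtain ⟨N, hN⟩ := exists_forall_mul_pow_add_mul_pow_lt hm hlm hc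
    (d := closedFormCoeff mu lam 9366 106302) (d' := closedFormCoeff mu lam 9492 106932)
  refine ⟨N + 4, fun n hn hodd => ?_⟩
  obtain ⟨m, rfl⟩ : ∃ m, n = m + 4 := ⟨n - 4, by omega⟩
  have hm_odd : Odd m := (Nat.odd_add.1 hodd).2 (by decide)
  exact_mod_cast (hE hm_odd).trans_lt ((hN m (by omega)).trans_eq (hP hm_odd).symm)
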